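/- arXiv:math/9409211 — 3 statements merged into one kernel-verified Lean document; each statement's English description precedes it below -/
import Mathlib

section
/- In any additive category, if morphisms ξ : X → Y and η : Y → X satisfy ξηξ = ξ and ηξη = η, then the automorphism of X ⊕ Y given by the product of elementary matrices [[1,0],[ξ,1]]·[[1,-η],[0,1]]·[[1,0],[ξ,1]] conjugates the diagonal endomorphism diag(ηξ, 0) into diag(0, ξη). -/
open CategoryTheory CategoryTheory.Limits

/-- In any additive category, if `ξ : X ⟶ Y` and `η : Y ⟶ X` satisfy
`ξηξ = ξ` and `ηξη = η` (classically; in diagrammatic order `ξ ≫ η ≫ ξ = ξ` etc.),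
then the automorphism `u = [[1,0],[ξ,1]]·[[1,-η],[0,1]]·[[1,0],[ξ,1]]` of `X ⊞ Y`
is invertible and conjugates `diag(ηξ, 0)` into `diag(0, ξη)`, i.e. (translating the
classical identity `u · diag(ηξ,0) = diag(0,ξη) · u` into diagrammatic composition)
`diag(ηξ,0) ≫ u = u ≫ diag(0,ξη)`.  Here a classical matrix entry `M r s`
(from component `s` to component `r`) corresponds to the argument `f s r` of
`Biprod.ofComponents`. -/
theorem stmt0 {C : Type*} [Category C] [Preadditive C] [HasBinaryBiproducts C]
    {X Y : C} (ξ : X ⟶ Y) (η : Y ⟶ X)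
    (h1 : ξ ≫ η ≫ ξ = ξ) (h2 : η ≫ ξ ≫ η = η) :
    letI Elow : X ⊞ Y ⟶ X ⊞ Y := Biprod.ofComponents (𝟙 X) ξ 0 (𝟙 Y)
    letI Eup  : X ⊞ Y ⟶ X ⊞ Y := Biprod.ofComponents (𝟙 X) 0 (-η) (𝟙 Y)
    letI u : X ⊞ Y ⟶ X ⊞ Y := Elow ≫ Eup ≫ Elow
    letI d  : X ⊞ Y ⟶ X ⊞ Y := Biprod.ofComponents (ξ ≫ η) 0 0 0
    letI d' : X ⊞ Y ⟶ X ⊞ Y := Biprod.ofComponents 0 0 0 (η ≫ ξ)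
    IsIso u ∧ d ≫ u = u ≫ d' := by
  constructor
  · have hlow : IsIso (Biprod.ofComponents (𝟙 X) ξ 0 (𝟙 Y)) :=
      (inferInstance : IsIso (Biprod.unipotentUpper ξ).hom)
    have hup : IsIso (Biprod.ofComponents (𝟙 X) 0 (-η) (𝟙 Y)) :=
      (inferInstance : IsIso (Biprod.unipotentLower (-η)).hom)
    exact IsIso.comp_isIso' hlow (IsIso.comp_isIso' hup hlow)
  · simp only [Biprod.ofComponents_comp, Category.comp_id, Category.id_comp,
      Category.assoc, comp_zero, zero_comp, add_zero, zero_add, Preadditive.comp_neg, Preadditive.neg_comp,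
      h1, h2]
    congr 1 <;> simp [h1, h2, Category.assoc]
end

section
/- If two inverse systems of abelian groups {Aₙ} and {Bₙ} indexed by ℕ are stably isomorphic (pro-isomorphic), then lim Aₙ ≅ lim Bₙ and lim¹ Aₙ ≅ lim¹ Bₙ. -/
/-- The shift-difference map whose kernel is `lim` and cokernel is `lim¹`. -/
def shiftDiff (A : ℕ → Type*) [∀ n, AddCommGroup (A n)]
    (f : ∀ n, A (n + 1) →+ A n) : (∀ n, A n) →+ (∀ n, A n) :=
  AddMonoidHom.mk' (fun a n => a n - f n (a (n + 1))) (by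
    intro a b; funext n
    simp only [Pi.add_apply, map_add]; abel)

/-- The composite transition map `A m →+ A n` for `n ≤ m`. -/
def trLE (A : ℕ → Type*) [∀ n, AddCommGroup (A n)]
    (f : ∀ n, A (n + 1) →+ A n) {n m : ℕ} (h : n ≤ m) : A m →+ A n :=
  Nat.leRecOn h (fun {k} (g : A k →+ A n) => g.comp (f k)) (AddMonoidHom.id (A n))

open Finset

section Aux

variable {A : ℕ → Type*} [∀ n, AddCommGroup (A n)] (f : ∀ n, A (n + 1) →+ A n)

theorem trLE_refl (n : ℕ) : trLE A f (le_refl n) = AddMonoidHom.id (A n) :=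
  Nat.leRecOn_self _

theorem trLE_succ {n m : ℕ} (h : n ≤ m) (h2 : n ≤ m + 1) :
    trLE A f h2 = (trLE A f h).comp (f m) :=
  Nat.leRecOn_succ h _

theorem trLE_trans {n m k : ℕ} (h1 : n ≤ m) (h2 : m ≤ k) :
    trLE A f (h1.trans h2) = (trLE A f h1).comp (trLE A f h2) := by
  induction k, h2 using Nat.le_induction with
  | base => rw [trLE_refl, AddMonoidHom.comp_id]
  | succ k hk ih =>
      rw [trLE_succ f (h1.trans hk), trLE_succ f hk, ih, AddMonoidHom.comp_assoc]

/-- Total version of `trLE`. -/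
def trail (p j : ℕ) : A j →+ A p := if h : p ≤ j then trLE A f h else 0

theorem trail_of_le {p j : ℕ} (h : p ≤ j) : trail f p j = trLE A f h := dif_pos h

theorem trail_self (p : ℕ) (x : A p) : trail f p p x = x := by
  rw [trail_of_le f (le_refl p), trLE_refl]; rfl

theorem trail_trail {p q j : ℕ} (h1 : p ≤ q) (h2 : q ≤ j) (x : A j) :
    trail f p q (trail f q j x) = trail f p j x := by
  rw [trail_of_le f h1, trail_of_le f h2, trail_of_le f (h1.trans h2), trLE_trans f h1 h2]; rfl

theorem trail_eq_f (n : ℕ) : trail f n (n + 1) = f n := by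
  rw [trail_of_le f (Nat.le_succ n), trLE_succ f (le_refl n), trLE_refl,
    AddMonoidHom.id_comp]

theorem f_trail {n j : ℕ} (h : n + 1 ≤ j) (x : A j) :
    f n (trail f (n + 1) j x) = trail f n j x := by
  rw [← trail_eq_f f n, trail_trail f (Nat.le_succ n) h]

theorem trail_f {p q : ℕ} (h : p ≤ q) (x : A (q + 1)) :
    trail f p q (f q x) = trail f p (q + 1) x := by
  rw [← trail_eq_f f q, trail_trail f h (Nat.le_succ q)]

theorem trail_shiftDiff_sum {p q : ℕ} (h : p ≤ q) (a : ∀ n, A n) :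
    ∑ j ∈ Ico p q, trail f p j (shiftDiff A f a j) = a p - trail f p q (a q) := by
  induction q, h using Nat.le_induction with
  | base => simp [trail_self]
  | succ q hq ih =>
      rw [sum_Ico_succ_top hq, ih]
      have hd : shiftDiff A f a q = a q - f q (a (q + 1)) := rfl
      rw [hd, map_sub, trail_f f hq]
      abel

end Aux

section Two

variable {A : ℕ → Type*} {B : ℕ → Type*}
  [∀ n, AddCommGroup (A n)] [∀ n, AddCommGroup (B n)]
  (f : ∀ n, A (n + 1) →+ A n) (g : ∀ n, B (n + 1) →+ B n)

/-- The levelwise map on products induced by a pro-morphism (restriction). -/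
def restr (lam : ℕ → ℕ) (φ : ∀ n, A (lam n) →+ B n) : (∀ n, A n) →+ (∀ n, B n) :=
  AddMonoidHom.mk' (fun a n => φ n (a (lam n))) (by
    intro a b; funext n; simp)

/-- The block-sum map on products induced by a pro-morphism. -/
def bigPhi (lam : ℕ → ℕ) (φ : ∀ n, A (lam n) →+ B n) : (∀ n, A n) →+ (∀ n, B n) :=
  AddMonoidHom.mk' (fun a n => φ n (∑ j ∈ Ico (lam n) (lam (n + 1)), trail f (lam n) j (a j)))
    (by
      intro a b; funext n
      simp [map_add, Finset.sum_add_distrib])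

theorem bigPhi_congr {lam : ℕ → ℕ} {φ₁ φ₂ : ∀ n, A (lam n) →+ B n}
    (h : ∀ n, φ₁ n = φ₂ n) : bigPhi f lam φ₁ = bigPhi f lam φ₂ :=
  AddMonoidHom.ext fun a => funext fun n => by
    show φ₁ n _ = φ₂ n _; rw [h n]

variable {lam : ℕ → ℕ} (hlam : ∀ n, lam n ≤ lam (n + 1))
  (φ : ∀ n, A (lam n) →+ B n)
  (hφ : ∀ n, (g n).comp (φ (n + 1)) = (φ n).comp (trLE A f (hlam n)))

include hlam hφ in
/-- A pro-morphism commutes with arbitrary transition maps. -/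
theorem trail_phi {n m : ℕ} (h : n ≤ m) (x : A (lam m)) :
    trail g n m (φ m x) = φ n (trail f (lam n) (lam m) x) := by
  have hl : Monotone lam := monotone_nat_of_le_succ hlam
  induction m, h using Nat.le_induction with
  | base => rw [trail_self, trail_self]
  | succ m hm ih =>
      have e1 : trail g n (m + 1) (φ (m + 1) x) = trail g n m (g m (φ (m + 1) x)) :=
        (trail_f g hm _).symm
      have h1 := DFunLike.congr_fun (hφ m) x
      simp only [AddMonoidHom.comp_apply] at h1
      rw [e1, h1, ih, ← trail_of_le f (hlam m), trail_trail f (hl hm) (hlam m)]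

include hlam hφ in
/-- The chain-map identity: `bigPhi ∘ d_A = d_B ∘ restr`. -/
theorem bigPhi_shiftDiff :
    (bigPhi f lam φ).comp (shiftDiff A f) = (shiftDiff B g).comp (restr lam φ) := by
  refine AddMonoidHom.ext fun a => funext fun n => ?_
  show φ n (∑ j ∈ Ico (lam n) (lam (n + 1)), trail f (lam n) j (shiftDiff A f a j)) =
    φ n (a (lam n)) - g n (φ (n + 1) (a (lam (n + 1))))
  have h1 := DFunLike.congr_fun (hφ n) (a (lam (n + 1)))
  simp only [AddMonoidHom.comp_apply] at h1
  rw [trail_shiftDiff_sum f (hlam n), map_sub, trail_of_le f (hlam n), ← h1]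

/-- Decomposition of a long telescope sum into blocks. -/
theorem sum_blocks (hlam : ∀ n, lam n ≤ lam (n + 1)) {r p q : ℕ}
    (hr : r ≤ lam p) (hpq : p ≤ q) (a : ∀ n, A n) :
    ∑ k ∈ Ico p q, trail f r (lam k)
      (∑ j ∈ Ico (lam k) (lam (k + 1)), trail f (lam k) j (a j))
      = ∑ j ∈ Ico (lam p) (lam q), trail f r j (a j) := by
  have hl : Monotone lam := monotone_nat_of_le_succ hlam
  induction q, hpq using Nat.le_induction with
  | base => simp
  | succ q hq ih =>
      rw [sum_Ico_succ_top hq, ih, map_sum]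
      have e : ∀ j ∈ Ico (lam q) (lam (q + 1)),
          trail f r (lam q) (trail f (lam q) j (a j)) = trail f r j (a j) :=
        fun j hj => trail_trail f (hr.trans (hl hq)) (mem_Ico.mp hj).1 _
      rw [sum_congr rfl e, sum_Ico_consecutive _ (hl hq) (hlam q)]

end Two

section Three

variable {A B C : ℕ → Type*}
  [∀ n, AddCommGroup (A n)] [∀ n, AddCommGroup (B n)] [∀ n, AddCommGroup (C n)]
  (f : ∀ n, A (n + 1) →+ A n) (g : ∀ n, B (n + 1) →+ B n) (h : ∀ n, C (n + 1) →+ C n)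

/-- Composition of block-sum maps is the block-sum map of the composite pro-morphism. -/
theorem bigPhi_bigPhi {lam mu : ℕ → ℕ}
    (hlam : ∀ n, lam n ≤ lam (n + 1)) (hmu : ∀ n, mu n ≤ mu (n + 1))
    (φ : ∀ n, A (lam n) →+ B n) (ψ : ∀ n, B (mu n) →+ C n)
    (hφ : ∀ n, (g n).comp (φ (n + 1)) = (φ n).comp (trLE A f (hlam n)))
    (a : ∀ n, A n) :
    bigPhi g mu ψ (bigPhi f lam φ a) =
      bigPhi f (fun n => lam (mu n)) (fun n => (ψ n).comp (φ (mu n))) a := by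
  funext n
  show ψ n (∑ k ∈ Ico (mu n) (mu (n + 1)), trail g (mu n) k
      (φ k (∑ j ∈ Ico (lam k) (lam (k + 1)), trail f (lam k) j (a j)))) =
    ψ n (φ (mu n) (∑ j ∈ Ico (lam (mu n)) (lam (mu (n + 1))),
      trail f (lam (mu n)) j (a j)))
  congr 1
  have e : ∀ k ∈ Ico (mu n) (mu (n + 1)),
      trail g (mu n) k (φ k (∑ j ∈ Ico (lam k) (lam (k + 1)), trail f (lam k) j (a j)))
      = φ (mu n) (trail f (lam (mu n)) (lam k)
          (∑ j ∈ Ico (lam k) (lam (k + 1)), trail f (lam k) j (a j))) :=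
    fun k hk => trail_phi f g hlam φ hφ (mem_Ico.mp hk).1 _
  rw [sum_congr rfl e, ← map_sum, sum_blocks f hlam le_rfl (hmu n) a]

end Three

section Homotopy

variable {A : ℕ → Type*} [∀ n, AddCommGroup (A n)] (f : ∀ n, A (n + 1) →+ A n)

/-- The block-sum map of a transition pro-morphism is the identity on the cokernel. -/
theorem sub_bigPhi_tr_mem {nu : ℕ → ℕ} (hnu : ∀ n, nu n ≤ nu (n + 1))
    (hnu' : ∀ n, n ≤ nu n) (a : ∀ n, A n) :
    a - bigPhi f nu (fun n => trLE A f (hnu' n)) a ∈ (shiftDiff A f).range := by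
  refine ⟨fun n => ∑ j ∈ Ico n (nu n), trail f n j (a j), ?_⟩
  funext n
  show (∑ j ∈ Ico n (nu n), trail f n j (a j)) -
      f n (∑ j ∈ Ico (n + 1) (nu (n + 1)), trail f (n + 1) j (a j)) =
    a n - trLE A f (hnu' n) (∑ j ∈ Ico (nu n) (nu (n + 1)), trail f (nu n) j (a j))
  have e1 : f n (∑ j ∈ Ico (n + 1) (nu (n + 1)), trail f (n + 1) j (a j)) =
      ∑ j ∈ Ico (n + 1) (nu (n + 1)), trail f n j (a j) := by
    rw [map_sum]
    exact sum_congr rfl fun j hj => f_trail f (mem_Ico.mp hj).1 _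
  have e2 : trLE A f (hnu' n) (∑ j ∈ Ico (nu n) (nu (n + 1)), trail f (nu n) j (a j)) =
      ∑ j ∈ Ico (nu n) (nu (n + 1)), trail f n j (a j) := by
    rw [← trail_of_le f (hnu' n), map_sum]
    exact sum_congr rfl fun j hj => trail_trail f (hnu' n) (mem_Ico.mp hj).1 _
  rw [e1, e2]
  have h1 : (∑ j ∈ Ico n (nu n), trail f n j (a j)) =
      (∑ j ∈ Ico n (nu (n + 1)), trail f n j (a j)) -
        ∑ j ∈ Ico (nu n) (nu (n + 1)), trail f n j (a j) := by
    rw [← sum_Ico_consecutive (fun j => trail f n j (a j)) (hnu' n) (hnu n)]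
    abel
  have h2 : (∑ j ∈ Ico (n + 1) (nu (n + 1)), trail f n j (a j)) =
      (∑ j ∈ Ico n (nu (n + 1)), trail f n j (a j)) - a n := by
    rw [sum_eq_sum_Ico_succ_bot (lt_of_lt_of_le (Nat.lt_succ_self n) (hnu' (n + 1)))
      (fun j => trail f n j (a j)), trail_self]
    abel
  rw [h1, h2]
  abel

/-- Kernel elements are compatible sequences. -/
theorem compat_of_mem_ker {a : ∀ n, A n} (ha : shiftDiff A f a = 0)
    {n m : ℕ} (h : n ≤ m) : trLE A f h (a m) = a n := by
  induction m, h using Nat.le_induction with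
  | base => rw [trLE_refl]; rfl
  | succ m hm ih =>
      have hf : f m (a (m + 1)) = a m := by
        have := congrFun ha m
        change a m - f m (a (m + 1)) = 0 at this
        rw [sub_eq_zero] at this
        exact this.symm
      rw [trLE_succ f hm]
      show trLE A f hm (f m (a (m + 1))) = a n
      rw [hf, ih]

end Homotopy

section Ker

variable {A B : ℕ → Type*}
  [∀ n, AddCommGroup (A n)] [∀ n, AddCommGroup (B n)]
  (f : ∀ n, A (n + 1) →+ A n) (g : ∀ n, B (n + 1) →+ B n)

theorem restr_ker {lam : ℕ → ℕ} (hlam : ∀ n, lam n ≤ lam (n + 1))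
    (φ : ∀ n, A (lam n) →+ B n)
    (hφ : ∀ n, (g n).comp (φ (n + 1)) = (φ n).comp (trLE A f (hlam n)))
    {a : ∀ n, A n} (ha : shiftDiff A f a = 0) :
    shiftDiff B g (restr lam φ a) = 0 := by
  funext n
  show φ n (a (lam n)) - g n (φ (n + 1) (a (lam (n + 1)))) = 0
  have h1 := DFunLike.congr_fun (hφ n) (a (lam (n + 1)))
  simp only [AddMonoidHom.comp_apply] at h1
  rw [h1]
  show φ n _ - φ n (trLE A f (hlam n) (a (lam (n + 1)))) = 0
  rw [compat_of_mem_ker f ha (hlam n), sub_self]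

end Ker


/-- if two inverse systems of abelian groups `{Aₙ}` and `{Bₙ}`
indexed by ℕ are stably (pro-) isomorphic — i.e. there are strictly increasing
reindexing functions `lam, mu : ℕ → ℕ` and compatible maps
`φₙ : A (lam n) →+ Bₙ`, `ψₙ : B (mu n) →+ Aₙ` whose composites agree with the
transition maps of the systems — then `lim A ≅ lim B` and `lim¹ A ≅ lim¹ B`. -/
theorem stmt4 (A B : ℕ → Type*)
    [∀ n, AddCommGroup (A n)] [∀ n, AddCommGroup (B n)]
    (f : ∀ n, A (n + 1) →+ A n) (g : ∀ n, B (n + 1) →+ B n)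
    (lam mu : ℕ → ℕ) (hlam : StrictMono lam) (hmu : StrictMono mu)
    (hlam' : ∀ n, n ≤ lam n) (hmu' : ∀ n, n ≤ mu n)
    (φ : ∀ n, A (lam n) →+ B n) (ψ : ∀ n, B (mu n) →+ A n)
    -- φ is a morphism of pro-systems:
    (hφ : ∀ n, (g n).comp (φ (n + 1)) =
      (φ n).comp (trLE A f (hlam (Nat.lt_succ_self n)).le))
    -- ψ is a morphism of pro-systems:
    (hψ : ∀ n, (f n).comp (ψ (n + 1)) =
      (ψ n).comp (trLE B g (hmu (Nat.lt_succ_self n)).le))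
    -- ψ ∘ φ agrees with the transition maps of A:
    (hψφ : ∀ n, (ψ n).comp (φ (mu n)) =
      trLE A f ((hmu' n).trans (hlam' (mu n))))
    -- φ ∘ ψ agrees with the transition maps of B:
    (hφψ : ∀ n, (φ n).comp (ψ (lam n)) =
      trLE B g ((hlam' n).trans (hmu' (lam n)))) :
    Nonempty (((shiftDiff A f).ker) ≃+ ((shiftDiff B g).ker)) ∧
    Nonempty (((∀ n, A n) ⧸ (shiftDiff A f).range) ≃+
      ((∀ n, B n) ⧸ (shiftDiff B g).range)) := by
  have hl1 : ∀ n, lam n ≤ lam (n + 1) := fun n => (hlam (Nat.lt_succ_self n)).le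
  have hm1 : ∀ n, mu n ≤ mu (n + 1) := fun n => (hmu (Nat.lt_succ_self n)).le
  have hφ' : ∀ n, (g n).comp (φ (n + 1)) = (φ n).comp (trLE A f (hl1 n)) := hφ
  have hψ' : ∀ n, (f n).comp (ψ (n + 1)) = (ψ n).comp (trLE B g (hm1 n)) := hψ
  constructor
  · -- kernels (lim)
    refine ⟨{
      toFun := fun x => ⟨restr lam φ x.1,
        AddMonoidHom.mem_ker.mpr (restr_ker f g hl1 φ hφ' (AddMonoidHom.mem_ker.mp x.2))⟩
      invFun := fun y => ⟨restr mu ψ y.1,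
        AddMonoidHom.mem_ker.mpr (restr_ker g f hm1 ψ hψ' (AddMonoidHom.mem_ker.mp y.2))⟩
      left_inv := ?_
      right_inv := ?_
      map_add' := ?_ }⟩
    · rintro ⟨a, ha⟩
      apply Subtype.ext
      funext n
      show ψ n (φ (mu n) (a (lam (mu n)))) = a n
      have h1 := DFunLike.congr_fun (hψφ n) (a (lam (mu n)))
      simp only [AddMonoidHom.comp_apply] at h1
      rw [h1]
      exact compat_of_mem_ker f (AddMonoidHom.mem_ker.mp ha) _
    · rintro ⟨b, hb⟩
      apply Subtype.ext
      funext n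
      show φ n (ψ (lam n) (b (mu (lam n)))) = b n
      have h1 := DFunLike.congr_fun (hφψ n) (b (mu (lam n)))
      simp only [AddMonoidHom.comp_apply] at h1
      rw [h1]
      exact compat_of_mem_ker g (AddMonoidHom.mem_ker.mp hb) _
    · intro x y
      apply Subtype.ext
      exact map_add (restr lam φ) x.1 y.1
  · -- cokernels (lim¹)
    have hΦle : (shiftDiff A f).range ≤
        AddSubgroup.comap (bigPhi f lam φ) (shiftDiff B g).range := by
      rintro x ⟨b, rfl⟩
      exact ⟨restr lam φ b,
        (DFunLike.congr_fun (bigPhi_shiftDiff f g hl1 φ hφ') b).symm⟩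
    have hΨle : (shiftDiff B g).range ≤
        AddSubgroup.comap (bigPhi g mu ψ) (shiftDiff A f).range := by
      rintro x ⟨b, rfl⟩
      exact ⟨restr mu ψ b,
        (DFunLike.congr_fun (bigPhi_shiftDiff g f hm1 ψ hψ') b).symm⟩
    let Φq := QuotientAddGroup.map _ _ (bigPhi f lam φ) hΦle
    let Ψq := QuotientAddGroup.map _ _ (bigPhi g mu ψ) hΨle
    have keyA : ∀ a : ∀ n, A n,
        Ψq (Φq (QuotientAddGroup.mk a)) = QuotientAddGroup.mk a := by
      intro a
      have m1 : Φq (QuotientAddGroup.mk a) = QuotientAddGroup.mk (bigPhi f lam φ a) :=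
        QuotientAddGroup.map_mk _ _ _ _ _
      have m2 : Ψq (QuotientAddGroup.mk (bigPhi f lam φ a)) =
          QuotientAddGroup.mk (bigPhi g mu ψ (bigPhi f lam φ a)) :=
        QuotientAddGroup.map_mk _ _ _ _ _
      rw [m1, m2, bigPhi_bigPhi f g hl1 hm1 φ ψ hφ' a,
        DFunLike.congr_fun (bigPhi_congr f (fun n => hψφ n)) a]
      have hsub := sub_bigPhi_tr_mem f (nu := fun n => lam (mu n))
        (fun n => hlam.monotone (hm1 n)) (fun n => (hmu' n).trans (hlam' (mu n))) a
      have hneg := (shiftDiff A f).range.neg_mem hsub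
      rw [neg_sub] at hneg
      exact (QuotientAddGroup.eq_iff_sub_mem).mpr hneg
    have keyB : ∀ b : ∀ n, B n,
        Φq (Ψq (QuotientAddGroup.mk b)) = QuotientAddGroup.mk b := by
      intro b
      have m1 : Ψq (QuotientAddGroup.mk b) = QuotientAddGroup.mk (bigPhi g mu ψ b) :=
        QuotientAddGroup.map_mk _ _ _ _ _
      have m2 : Φq (QuotientAddGroup.mk (bigPhi g mu ψ b)) =
          QuotientAddGroup.mk (bigPhi f lam φ (bigPhi g mu ψ b)) :=
        QuotientAddGroup.map_mk _ _ _ _ _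
      rw [m1, m2, bigPhi_bigPhi g f hm1 hl1 ψ φ hψ' b,
        DFunLike.congr_fun (bigPhi_congr g (fun n => hφψ n)) b]
      have hsub := sub_bigPhi_tr_mem g (nu := fun n => mu (lam n))
        (fun n => hmu.monotone (hl1 n)) (fun n => (hlam' n).trans (hmu' (lam n))) b
      have hneg := (shiftDiff B g).range.neg_mem hsub
      rw [neg_sub] at hneg
      exact (QuotientAddGroup.eq_iff_sub_mem).mpr hneg
    exact ⟨{
      toFun := Φq
      invFun := Ψq
      left_inv := fun x => QuotientAddGroup.induction_on x keyA
      right_inv := fun y => QuotientAddGroup.induction_on y keyB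
      map_add' := map_add Φq }⟩
end

section
/- Let ℱ be a family of subsets of B × (−∞, 0] (B a compact metric space) that is continuously controlled at B × {0}, meaning: for every b ∈ B and every neighborhood U of (b,0) in B × (−∞,0], there is a neighborhood V ⊆ U of (b,0) such that every F ∈ ℱ meeting V is contained in U. Then there is a strictly increasing function λ : ℕ → ℤ such that, setting Uₙ = B × [−2^{−λ(n)}, 0], every F ∈ ℱ meeting Uₙ is contained in U_{n−1} and has diameter at most 2^{−n}. -/
open Set

/-- The neighborhoods `Uₙ = B × [−2^{−λ(n)}, 0]` of `B × {0}` in `B × (−∞,0]`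
(with `U₀ = B × (−∞, 0]`). -/
def nbhdU (B : Type*) [MetricSpace B] (lam : ℕ → ℤ) (n : ℕ) :
    Set (B × ↥(Iic (0 : ℝ))) :=
  if n = 0 then univ else {p | -(2 : ℝ) ^ (-(lam n)) ≤ (p.2 : ℝ)}

lemma key13 {B : Type*} [MetricSpace B] [CompactSpace B]
    (F : Set (Set (B × ↥(Iic (0 : ℝ)))))
    (hcc : ∀ b : B, ∀ U ∈ nhds ((b, ⟨0, right_mem_Iic⟩) : B × ↥(Iic (0 : ℝ))),
      ∃ V ∈ nhds ((b, ⟨0, right_mem_Iic⟩) : B × ↥(Iic (0 : ℝ))), V ⊆ U ∧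
        ∀ f ∈ F, (f ∩ V).Nonempty → f ⊆ U)
    (ε : ℝ) (hε : 0 < ε) :
    ∃ δ > 0, ∀ f ∈ F, (∃ p ∈ f, -δ ≤ ((p : B × ↥(Iic (0 : ℝ))).2 : ℝ)) →
      Metric.diam f ≤ ε ∧ ∀ q ∈ f, -ε ≤ ((q : B × ↥(Iic (0 : ℝ))).2 : ℝ) := by
  by_cases hB : Nonempty B
  · -- main case
    have hU : ∀ b : B, ∃ r > 0, ∀ f ∈ F,
        (f ∩ Metric.ball ((b, ⟨0, right_mem_Iic⟩) : B × ↥(Iic (0 : ℝ))) r).Nonempty →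
          f ⊆ Metric.ball ((b, ⟨0, right_mem_Iic⟩) : B × ↥(Iic (0 : ℝ))) (ε / 3) := by
      intro b
      obtain ⟨V, hVn, hVU, hctrl⟩ := hcc b
        (Metric.ball ((b, ⟨0, right_mem_Iic⟩) : B × ↥(Iic (0 : ℝ))) (ε / 3))
        (Metric.ball_mem_nhds _ (by linarith))
      obtain ⟨r, hr, hrV⟩ := Metric.mem_nhds_iff.mp hVn
      exact ⟨r, hr, fun f hf ⟨p, hpf, hpV⟩ => hctrl f hf ⟨p, hpf, hrV hpV⟩⟩
    choose r hr hctrl using hU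
    obtain ⟨t, ht⟩ := isCompact_univ.elim_finite_subcover
      (fun b : B => Metric.ball b (r b / 2))
      (fun b => Metric.isOpen_ball)
      (fun x _ => mem_iUnion.mpr ⟨x, Metric.mem_ball_self (by linarith [hr x])⟩)
    have htne : t.Nonempty := by
      obtain ⟨x⟩ := hB
      obtain ⟨b, hb⟩ := mem_iUnion₂.mp (ht (mem_univ x))
      exact ⟨b, hb.1⟩
    set δ : ℝ := t.inf' htne (fun b => r b / 2) with hδdef
    have hδpos : 0 < δ := by
      rw [hδdef, Finset.lt_inf'_iff]
      exact fun b _ => by linarith [hr b]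
    refine ⟨δ, hδpos, fun f hf ⟨p, hpf, hp⟩ => ?_⟩
    obtain ⟨b, hbt, hbp⟩ := mem_iUnion₂.mp (ht (mem_univ p.1))
    have hδb : δ ≤ r b / 2 := Finset.inf'_le _ hbt
    have hpb : p ∈ Metric.ball ((b, ⟨0, right_mem_Iic⟩) : B × ↥(Iic (0 : ℝ))) (r b) := by
      rw [Metric.mem_ball, Prod.dist_eq]
      have h2 : dist p.2 (⟨0, right_mem_Iic⟩ : ↥(Iic (0 : ℝ))) ≤ r b / 2 := by
        rw [Subtype.dist_eq, Real.dist_eq]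
        have hple : (p.2 : ℝ) ≤ 0 := p.2.2
        rw [abs_of_nonpos (by simpa using hple)]
        simp only [sub_zero, neg_le]
        linarith
      calc max (dist p.1 b) (dist p.2 _) ≤ max (r b / 2) (r b / 2) :=
            max_le_max (le_of_lt hbp) h2
        _ < r b := by rw [max_self]; linarith [hr b]
    have hsub : f ⊆ Metric.ball ((b, ⟨0, right_mem_Iic⟩) : B × ↥(Iic (0 : ℝ))) (ε / 3) :=
      hctrl b f hf ⟨p, hpf, hpb⟩
    constructor
    · calc Metric.diam f ≤ Metric.diam
            (Metric.ball ((b, ⟨0, right_mem_Iic⟩) : B × ↥(Iic (0 : ℝ))) (ε / 3)) :=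
            Metric.diam_mono hsub Metric.isBounded_ball
        _ ≤ 2 * (ε / 3) := Metric.diam_ball (by linarith)
        _ ≤ ε := by linarith
    · intro q hq
      have := hsub hq
      rw [Metric.mem_ball, Prod.dist_eq] at this
      have h2 : dist q.2 (⟨0, right_mem_Iic⟩ : ↥(Iic (0 : ℝ))) < ε / 3 :=
        lt_of_le_of_lt (le_max_right _ _) this
      rw [Subtype.dist_eq, Real.dist_eq] at h2
      have hqle : (q.2 : ℝ) ≤ 0 := q.2.2
      rw [abs_of_nonpos (by simpa using hqle)] at h2
      simp only [sub_zero] at h2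
      linarith
  · exact ⟨1, one_pos, fun f hf ⟨p, _, _⟩ => absurd ⟨p.1⟩ hB⟩

/-- let `B` be a compact metric space and `ℱ` a family of subsets of
`B × (−∞, 0]` which is continuously controlled at `B × {0}`: for every `b ∈ B` and
neighborhood `U` of `(b,0)` there is a smaller neighborhood `V` of `(b,0)` such that
every `F ∈ ℱ` meeting `V` is contained in `U`.  Then there is a strictly increasing
`λ : ℕ → ℤ` such that, with `Uₙ = B × [−2^{−λ(n)}, 0]` (and `U₀` the whole space),
every `F ∈ ℱ` meeting `Uₙ` is contained in `U_{n−1}` and has diameter at most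
`2^{−n}`, for all `n ≥ 1`. -/
theorem stmt13 {B : Type*} [MetricSpace B] [CompactSpace B]
    (F : Set (Set (B × ↥(Iic (0 : ℝ)))))
    (hcc : ∀ b : B, ∀ U ∈ nhds ((b, ⟨0, right_mem_Iic⟩) : B × ↥(Iic (0 : ℝ))),
      ∃ V ∈ nhds ((b, ⟨0, right_mem_Iic⟩) : B × ↥(Iic (0 : ℝ))), V ⊆ U ∧
        ∀ f ∈ F, (f ∩ V).Nonempty → f ⊆ U) :
    ∃ lam : ℕ → ℤ, StrictMono lam ∧
      ∀ n : ℕ, ∀ f ∈ F, (f ∩ nbhdU B lam (n + 1)).Nonempty →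
        f ⊆ nbhdU B lam n ∧ Metric.diam f ≤ (2 : ℝ) ^ (-(n + 1 : ℤ)) := by
  have next : ∀ a : ℤ, ∀ n : ℕ, ∃ m : ℤ, a < m ∧ ∀ f ∈ F,
      (∃ p ∈ f, -((2:ℝ) ^ (-m)) ≤ ((p : B × ↥(Iic (0 : ℝ))).2 : ℝ)) →
        Metric.diam f ≤ (2:ℝ) ^ (-(n + 1 : ℤ)) ∧
        ∀ q ∈ f, -((2:ℝ) ^ (-a)) ≤ ((q : B × ↥(Iic (0 : ℝ))).2 : ℝ) := by
    intro a n
    set ε : ℝ := min ((2:ℝ) ^ (-(n + 1 : ℤ))) ((2:ℝ) ^ (-a)) with hεdef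
    have hεpos : 0 < ε := lt_min (by positivity) (by positivity)
    obtain ⟨δ, hδpos, hδ⟩ := key13 F hcc ε hεpos
    -- pick m : ℤ with a < m and 2^{-m} ≤ δ
    obtain ⟨k, hk⟩ := exists_pow_lt_of_lt_one hδpos (by norm_num : (1/2 : ℝ) < 1)
    set m : ℤ := max (a + 1) k with hmdef
    have ham : a < m := lt_of_lt_of_le (lt_add_one a) (le_max_left _ _)
    have hmδ : (2:ℝ) ^ (-m) ≤ δ := by
      have h1 : (2:ℝ) ^ (-m) ≤ (2:ℝ) ^ (-(k:ℤ)) :=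
        zpow_le_zpow_right₀ one_le_two (neg_le_neg (le_max_right (a+1) (k:ℤ)))
      have h2 : (2:ℝ) ^ (-(k:ℤ)) = (1/2 : ℝ) ^ k := by
        rw [zpow_neg, zpow_natCast, one_div, inv_pow]
      linarith [h1, h2 ▸ h1, hk]
    refine ⟨m, ham, fun f hf ⟨p, hpf, hp⟩ => ?_⟩
    have hδp : -δ ≤ ((p : B × ↥(Iic (0 : ℝ))).2 : ℝ) :=
      le_trans (neg_le_neg hmδ) hp
    obtain ⟨hd, hq⟩ := hδ f hf ⟨p, hpf, hδp⟩
    exact ⟨le_trans hd (min_le_left _ _),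
      fun q hqf => le_trans (neg_le_neg (min_le_right _ _)) (hq q hqf)⟩
  choose nxt hlt hprop using next
  refine ⟨fun n => Nat.rec (0 : ℤ) (fun n a => nxt a n) n, ?_, ?_⟩
  · exact strictMono_nat_of_lt_succ fun n => hlt _ n
  · intro n f hf ⟨p, hpf, hp⟩
    have hp' : -((2:ℝ) ^ (-(nxt (Nat.rec (0:ℤ) (fun n a => nxt a n) n) n))) ≤
        ((p : B × ↥(Iic (0 : ℝ))).2 : ℝ) := by
      simpa [nbhdU] using hp
    obtain ⟨hd, hq⟩ := hprop _ n f hf ⟨p, hpf, hp'⟩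
    refine ⟨?_, hd⟩
    intro q hqf
    cases n with
    | zero => simp [nbhdU]
    | succ k =>
      simp only [nbhdU, Nat.succ_ne_zero, if_neg, mem_setOf_eq]
      exact hq q hqf
end
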